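/- arXiv:2308.16841 — 4 statements merged into one kernel-verified Lean document; each statement's English description precedes it below -/
import Mathlib

section
/- Let G be a group and u, v two commuting elements satisfying u^{s1} = v^{-s2} and v^{s1} = u^{-(s1+s2)} for nonnegative integers s1, s2 not both zero. Then v^{gcd(s1,s2)} lies in the cyclic subgroup ⟨u⟩, and consequently every element of ⟨u, v⟩ can be written as u^i v^j with 0 ≤ j < gcd(s1,s2). -/
/-!
Bézout: `v ^ gcd(s1, s2)` is a product of integer powers of `v ^ s1 = u ^ -(s1 + s2)` and
`v ^ s2 = u ^ -s1`, hence a power of `u`. Since `u` and `v` commute, every element of `⟨u, v⟩` is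
`u ^ i * v ^ j`, and `v ^ j` can then be reduced modulo `gcd(s1, s2)` at the cost of a power of `u`.
-/

open Subgroup

section

variable {G : Type*} [Group G]

theorem pow_gcd_mem_of_pow_mem {H : Subgroup G} {x : G} {m n : ℕ} (hm : x ^ m ∈ H)
    (hn : x ^ n ∈ H) : x ^ m.gcd n ∈ H := by
  have h := H.mul_mem (H.zpow_mem hm (m.gcdA n)) (H.zpow_mem hn (m.gcdB n))
  rwa [← zpow_natCast, ← zpow_natCast, ← zpow_mul, ← zpow_mul, ← zpow_add,
    ← Nat.gcd_eq_gcd_ab, zpow_natCast] at h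

theorem Commute.exists_zpow_mul_zpow_of_mem_closure_pair {u v w : G} (huv : Commute u v)
    (hw : w ∈ closure ({u, v} : Set G)) : ∃ m n : ℤ, u ^ m * v ^ n = w := by
  have hle : zpowers v ≤ normalizer (zpowers u : Set G) := by
    refine (zpowers_le.mpr (mem_centralizer_iff.mpr ?_)).trans (centralizer_le_normalizer _)
    rintro _ ⟨k, rfl⟩
    exact (huv.zpow_left k).eq
  rw [← Set.singleton_union, Subgroup.closure_union, ← zpowers_eq_closure, ← zpowers_eq_closure,
    ← SetLike.mem_coe, coe_mul_of_right_le_normalizer_left _ _ hle] at hw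
  obtain ⟨_, ⟨m, rfl⟩, _, ⟨n, rfl⟩, rfl⟩ := hw
  exact ⟨m, n, rfl⟩

theorem exists_zpow_mul_pow_lt_of_pow_mem_zpowers {u v : G} {g : ℕ} (hg : 0 < g)
    (hv : v ^ g ∈ zpowers u) (j : ℤ) : ∃ (k : ℤ) (r : ℕ), r < g ∧ v ^ j = u ^ k * v ^ r := by
  obtain ⟨a, ha : u ^ a = v ^ g⟩ := hv
  have hg' : (0 : ℤ) < g := Int.natCast_pos.mpr hg
  have hr := Int.emod_nonneg j hg'.ne'
  refine ⟨a * (j / g), (j % g).toNat, by have := Int.emod_lt_of_pos j hg'; omega, ?_⟩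
  calc v ^ j = (v ^ g) ^ (j / g) * v ^ (j % g) := by
        rw [← zpow_natCast, ← zpow_mul, ← zpow_add, Int.mul_ediv_add_emod]
    _ = u ^ (a * (j / g)) * v ^ (j % g).toNat := by
        rw [← ha, zpow_mul, ← zpow_natCast, Int.toNat_of_nonneg hr]

end

theorem stmt_1 {G : Type*} [Group G] (u v : G) (huv : Commute u v)
    (s1 s2 : ℕ) (hs : (s1, s2) ≠ (0, 0))
    (h1 : u ^ s1 = (v ^ s2)⁻¹) (h2 : v ^ s1 = (u ^ (s1 + s2))⁻¹) :
    v ^ Nat.gcd s1 s2 ∈ Subgroup.zpowers u ∧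
      ∀ w ∈ Subgroup.closure ({u, v} : Set G),
        ∃ (i : ℤ) (j : ℕ), j < Nat.gcd s1 s2 ∧ w = u ^ i * v ^ j := by
  have hv1 : v ^ s1 ∈ zpowers u := h2 ▸ inv_mem (npow_mem_zpowers u _)
  have hv2 : v ^ s2 ∈ zpowers u := inv_inv (v ^ s2) ▸ h1 ▸ inv_mem (npow_mem_zpowers u _)
  have hvg : v ^ s1.gcd s2 ∈ zpowers u := pow_gcd_mem_of_pow_mem hv1 hv2
  have hg : 0 < s1.gcd s2 := by simpa [Nat.pos_iff_ne_zero, Nat.gcd_eq_zero_iff] using hs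
  refine ⟨hvg, fun w hw => ?_⟩
  obtain ⟨i, j, rfl⟩ := huv.exists_zpow_mul_zpow_of_mem_closure_pair hw
  obtain ⟨k, r, hr, hj⟩ := exists_zpow_mul_pow_lt_of_pow_mem_zpowers hg hvg j
  exact ⟨i + k, r, hr, by rw [hj, ← mul_assoc, ← zpow_add]⟩
end

section
/- Let K be a finite abelian group generated by two elements σ and τ, let A = ord(σ), B = |K : ⟨σ⟩|, C = |K : ⟨τ⟩|, and set D = A/C (which is an integer). Then ord(τ) = D·B, lcm(ord(σ), ord(τ)) = D·lcm(C, B), and |K| = lcm(ord(σ), ord(τ)) · gcd(C, B). -/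
/-!
Since `K = ⟨σ⟩⟨τ⟩` and `⟨τ⟩` is normal, `K ⧸ ⟨τ⟩ ≃ ⟨σ⟩ ⧸ (⟨σ⟩ ⊓ ⟨τ⟩)`, so `C ∣ A`; write `A = D·C`.
Counting `K` through both cyclic subgroups gives `A·B = |K| = ord(τ)·C`, hence `ord(τ) = D·B`.
Then `lcm(A, ord τ) = lcm(D·C, D·B) = D·lcm(C, B)` and `|K| = D·C·B = D·lcm(C, B)·gcd(C, B)`.
-/

namespace Subgroup

variable {G : Type*} [Group G]

theorem index_dvd_card_of_sup_eq_top {H N : Subgroup G} [N.Normal] (h : H ⊔ N = ⊤) :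
    N.index ∣ Nat.card H := by
  rw [← relIndex_top_right, ← h, relIndex_sup_right]
  exact relIndex_dvd_card N H

theorem closure_pair_eq_zpowers_sup_zpowers (x y : G) :
    closure ({x, y} : Set G) = zpowers x ⊔ zpowers y := by
  rw [Set.insert_eq, closure_union, zpowers_eq_closure, zpowers_eq_closure]

theorem orderOf_mul_index_zpowers (g : G) : orderOf g * (zpowers g).index = Nat.card G := by
  rw [← Nat.card_zpowers]
  exact card_mul_index _

end Subgroup

open Subgroup in
theorem stmt_6 {K : Type*} [CommGroup K] [Fintype K] (σ τ : K)
    (hgen : Subgroup.closure ({σ, τ} : Set K) = ⊤) :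
    (Subgroup.zpowers τ).index ∣ orderOf σ ∧
    orderOf τ = (orderOf σ / (Subgroup.zpowers τ).index) * (Subgroup.zpowers σ).index ∧
    Nat.lcm (orderOf σ) (orderOf τ) =
      (orderOf σ / (Subgroup.zpowers τ).index) *
        Nat.lcm ((Subgroup.zpowers τ).index) ((Subgroup.zpowers σ).index) ∧
    Fintype.card K =
      Nat.lcm (orderOf σ) (orderOf τ) *
        Nat.gcd ((Subgroup.zpowers τ).index) ((Subgroup.zpowers σ).index) := by
  obtain ⟨D, hA⟩ : (zpowers τ).index ∣ orderOf σ := by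
    rw [← Nat.card_zpowers]
    exact index_dvd_card_of_sup_eq_top (closure_pair_eq_zpowers_sup_zpowers σ τ ▸ hgen)
  have hC : 0 < (zpowers τ).index := Nat.pos_of_ne_zero index_ne_zero_of_finite
  have hD : orderOf σ / (zpowers τ).index = D := by rw [hA, Nat.mul_div_cancel_left D hC]
  have hT : orderOf τ = D * (zpowers σ).index := by
    refine Nat.eq_of_mul_eq_mul_right hC ?_
    rw [orderOf_mul_index_zpowers, ← orderOf_mul_index_zpowers σ, hA]
    ring
  have hlcm :
      Nat.lcm (orderOf σ) (orderOf τ) = D * Nat.lcm (zpowers τ).index (zpowers σ).index := by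
    rw [hA, hT, mul_comm _ D, Nat.lcm_mul_left]
  refine ⟨⟨D, hA⟩, hD ▸ hT, hD ▸ hlcm, ?_⟩
  rw [← Nat.card_eq_fintype_card, ← orderOf_mul_index_zpowers σ, hlcm, hA, mul_assoc D,
    mul_comm (Nat.lcm _ _), Nat.gcd_mul_lcm]
  ring
end

section
/- Let G = ⟨a, b | a^3 = b^3 = (ab)^3 = 1, (ab^{-1})^{s1}(a^{-1}b)^{s2} = 1⟩ be the rotational group of the toroidal hypermap (3,3,3)_{(s1,s2)} with s1 + s2 > 2. Then the cyclic subgroup ⟨a⟩ is core-free in G. -/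
/-!
Write `(x, y) : ℤ × ℤ` for the Eisenstein integer `x + yω`, `ω² + ω + 1 = 0`, and let
`λ = s1 - s2ω²`, of norm `s1² + s1 s2 + s2²`. The group acts on the torus `ℤ[ω]/(λ)` by
`a : z ↦ ωz` and `b : z ↦ ωz + 1`: then `ab⁻¹` and `a⁻¹b` are the translations by `-1` and `ω²`,
so the last relation holds exactly because `λ ≡ 0`. The subgroup `⟨a⟩` fixes `0`, so its core
also fixes `b • 0 = 1`. But `a` or `a²` fixes `1` only if `λ ∣ 1 - ω`, which is impossible:
`1 - ω` has norm `3`, less than the norm of `λ` once `s1 + s2 > 2`.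
-/

/-- Relations of the rotational group of the toroidal hypermap (3,3,3)_{(s1,s2)}. -/
def rels333 (s1 s2 : ℕ) : Set (FreeGroup (Fin 2)) :=
  { (FreeGroup.of 0) ^ 3, (FreeGroup.of 1) ^ 3,
    (FreeGroup.of 0 * FreeGroup.of 1) ^ 3,
    (FreeGroup.of 0 * (FreeGroup.of 1)⁻¹) ^ s1 *
      ((FreeGroup.of 0)⁻¹ * FreeGroup.of 1) ^ s2 }

open Equiv Submodule

theorem Subgroup.normalCore_eq_bot_of_fixes {G X : Type*} [Group G] {H : Subgroup G}
    (φ : G →* Perm X) {x : X} (hH : ∀ h ∈ H, φ h x = x) (b : G)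
    (h : ∀ y ∈ H, φ y (φ b x) = φ b x → y = 1) : H.normalCore = ⊥ := by
  refine (Subgroup.eq_bot_iff_forall _).mpr fun y hy => h y (H.normalCore_le hy) ?_
  have hconj : b⁻¹ * y * b ∈ H := by
    simpa using H.normalCore_le (H.normalCore_normal.conj_mem y hy b⁻¹)
  simpa [Perm.inv_def, symm_apply_eq] using hH _ hconj

theorem exists_pow_eq_of_mem_zpowers {G : Type*} [Group G] {a x : G} {n : ℕ} (hn : 0 < n)
    (ha : a ^ n = 1) (hx : x ∈ Subgroup.zpowers a) : ∃ r < n, a ^ r = x := by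
  obtain ⟨k, rfl⟩ := Subgroup.mem_zpowers_iff.mp hx
  have h0 : 0 ≤ k % n := Int.emod_nonneg k (by omega)
  have hlt : k % n < n := Int.emod_lt_of_pos k (by omega)
  refine ⟨(k % n).toNat, by omega, ?_⟩
  rw [zpow_eq_zpow_emod' k ha, ← zpow_natCast, Int.toNat_of_nonneg h0]

theorem Equiv.addRight_pow {M : Type*} [AddGroup M] (v : M) (n : ℕ) :
    Equiv.addRight v ^ n = Equiv.addRight (n • v) := by
  induction n with
  | zero => ext; simp
  | succ n ih => ext; simp [pow_succ, ih, succ_nsmul', add_assoc]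

section CubeRoot

variable {M : Type*} [AddCommGroup M] {ω : M →+ M}

theorem apply_apply_apply_of_cubeRoot (hω : ∀ x, x + ω x + ω (ω x) = 0) (x : M) :
    ω (ω (ω x)) = x := by
  have hωx := congrArg ω (hω x)
  simp only [map_add, map_zero] at hωx
  linear_combination (norm := module) hωx - hω x

theorem cubeRoot_comp_self (hω : ∀ x, x + ω x + ω (ω x) = 0) (x : M) :
    x + ω.comp ω x + ω.comp ω (ω.comp ω x) = 0 := by
  simp only [AddMonoidHom.comp_apply, apply_apply_apply_of_cubeRoot hω]
  linear_combination (norm := module) hω x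

variable (ω) in
def cubeRootRotation (hω : ∀ x, x + ω x + ω (ω x) = 0) : Perm M where
  toFun := ω
  invFun x := ω (ω x)
  left_inv := apply_apply_apply_of_cubeRoot hω
  right_inv := apply_apply_apply_of_cubeRoot hω

variable (hω : ∀ x, x + ω x + ω (ω x) = 0)

@[simp] theorem cubeRootRotation_apply (x : M) : cubeRootRotation ω hω x = ω x := rfl

@[simp] theorem cubeRootRotation_symm_apply (x : M) :
    (cubeRootRotation ω hω).symm x = ω (ω x) := rfl

theorem addRight_mul_cubeRootRotation_pow_three (v : M) :
    (Equiv.addRight v * cubeRootRotation ω hω) ^ 3 = 1 := by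
  ext x
  simp only [pow_succ, pow_zero, one_mul, Perm.mul_apply, cubeRootRotation_apply, coe_addRight,
    map_add, apply_apply_apply_of_cubeRoot hω, Perm.one_apply]
  linear_combination (norm := module) hω v

theorem cubeRootRotation_pow_three : cubeRootRotation ω hω ^ 3 = 1 := by
  simpa using addRight_mul_cubeRootRotation_pow_three hω 0

theorem cubeRootRotation_mul_affine (c : M) :
    cubeRootRotation ω hω * (Equiv.addRight c * cubeRootRotation ω hω) =
      Equiv.addRight (ω c) * cubeRootRotation (ω.comp ω) (cubeRoot_comp_self hω) := by
  ext x; simp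

theorem cubeRootRotation_mul_inv_affine (c : M) :
    cubeRootRotation ω hω * (Equiv.addRight c * cubeRootRotation ω hω)⁻¹ =
      Equiv.addRight (-c) := by
  simp [mul_inv_rev, ← mul_assoc]

theorem inv_cubeRootRotation_mul_affine (c : M) :
    (cubeRootRotation ω hω)⁻¹ * (Equiv.addRight c * cubeRootRotation ω hω) =
      Equiv.addRight (ω (ω c)) := by
  ext x; simp [apply_apply_apply_of_cubeRoot hω]

theorem eq_zero_of_cubeRootRotation_pow_apply {r : ℕ} (hr : r < 3) {x : M}
    (hfix : (cubeRootRotation ω hω ^ r) x = x) (hx : ω x ≠ x) : r = 0 := by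
  interval_cases r
  · rfl
  · exact absurd hfix (by simpa using hx)
  · refine absurd ?_ hx
    have hωfix := congrArg ω hfix
    simp only [sq, Perm.mul_apply, cubeRootRotation_apply,
      apply_apply_apply_of_cubeRoot hω] at hωfix
    exact hωfix.symm

end CubeRoot

namespace EisensteinCoord

def mulOmega : (ℤ × ℤ) →ₗ[ℤ] ℤ × ℤ where
  toFun v := (-v.2, v.1 - v.2)
  map_add' v w := by ext <;> simp <;> ring
  map_smul' n v := by ext <;> simp [mul_sub]

@[simp] theorem mulOmega_apply (v : ℤ × ℤ) : mulOmega v = (-v.2, v.1 - v.2) := rfl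

theorem mulOmega_cubeRoot (v : ℤ × ℤ) : v + mulOmega v + mulOmega (mulOmega v) = 0 := by
  ext <;> simp <;> ring

def normSq (v : ℤ × ℤ) : ℤ := v.1 ^ 2 - v.1 * v.2 + v.2 ^ 2

/-- The principal ideal `l ℤ[ω]`. -/
def idealSpan (l : ℤ × ℤ) : Submodule ℤ (ℤ × ℤ) := span ℤ {l, mulOmega l}

theorem self_mem_idealSpan (l : ℤ × ℤ) : l ∈ idealSpan l := subset_span (by simp)

theorem idealSpan_le_comap_mulOmega (l : ℤ × ℤ) :
    idealSpan l ≤ (idealSpan l).comap mulOmega := by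
  rw [idealSpan, span_le]
  rintro _ (rfl | rfl)
  · exact subset_span (by simp)
  · have h : mulOmega (mulOmega l) = -l - mulOmega l := by
      linear_combination (norm := module) mulOmega_cubeRoot l
    simp only [SetLike.mem_coe, mem_comap, h]
    exact sub_mem (neg_mem (self_mem_idealSpan l)) (subset_span (by simp))

theorem normSq_dvd_of_mem_idealSpan {l v : ℤ × ℤ} (hv : v ∈ idealSpan l) :
    normSq l ∣ normSq v := by
  obtain ⟨p, q, rfl⟩ := mem_span_pair.mp hv
  exact ⟨normSq (p, q), by simp [normSq]; ring⟩

theorem not_mem_idealSpan_of_normSq_lt {l v : ℤ × ℤ} (hv : 0 < normSq v)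
    (hlt : normSq v < normSq l) : v ∉ idealSpan l :=
  fun h => (Int.le_of_dvd hv (normSq_dvd_of_mem_idealSpan h)).not_gt hlt

abbrev Residue (l : ℤ × ℤ) := (ℤ × ℤ) ⧸ idealSpan l

def omegaResidue (l : ℤ × ℤ) : Residue l →+ Residue l :=
  (mapQ _ _ mulOmega (idealSpan_le_comap_mulOmega l)).toAddMonoidHom

theorem omegaResidue_cubeRoot (l : ℤ × ℤ) (x : Residue l) :
    x + omegaResidue l x + omegaResidue l (omegaResidue l x) = 0 := by
  obtain ⟨v, rfl⟩ := Submodule.Quotient.mk_surjective _ x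
  simp only [omegaResidue, LinearMap.toAddMonoidHom_coe, mapQ_apply, ← Quotient.mk_add,
    mulOmega_cubeRoot, Quotient.mk_zero]

end EisensteinCoord

open EisensteinCoord

section ToroidalHypermap

variable (s1 s2 : ℕ)

/-- `λ = s1 - s2ω²`. -/
def toroidalPeriod : ℤ × ℤ := ((s1 + s2 : ℤ), (s2 : ℤ))

abbrev rotA : Perm (Residue (toroidalPeriod s1 s2)) :=
  cubeRootRotation (omegaResidue _) (omegaResidue_cubeRoot _)

abbrev rotB : Perm (Residue (toroidalPeriod s1 s2)) :=
  Equiv.addRight (Submodule.Quotient.mk (1, 0)) * rotA s1 s2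

theorem lift_rels333_eq_one :
    ∀ r ∈ rels333 s1 s2, FreeGroup.lift ![rotA s1 s2, rotB s1 s2] r = 1 := by
  simp only [rels333, Set.mem_insert_iff, Set.mem_singleton_iff]
  rintro r (rfl | rfl | rfl | rfl)
  · simpa using cubeRootRotation_pow_three _
  · simpa using addRight_mul_cubeRootRotation_pow_three _ _
  · simpa [cubeRootRotation_mul_affine] using addRight_mul_cubeRootRotation_pow_three _ _
  · simp only [map_mul, map_pow, map_inv, FreeGroup.lift_apply_of, Matrix.cons_val_zero,
      Matrix.cons_val_one, cubeRootRotation_mul_inv_affine, inv_cubeRootRotation_mul_affine,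
      Equiv.addRight_pow]
    ext x
    simp only [Perm.mul_apply, coe_addRight, Perm.one_apply, add_assoc, add_eq_left]
    rw [← Submodule.Quotient.mk_neg]
    simp only [omegaResidue, LinearMap.toAddMonoidHom_coe, mapQ_apply, ← Quotient.mk_smul,
      ← Quotient.mk_add, Quotient.mk_eq_zero]
    convert neg_mem (self_mem_idealSpan (toroidalPeriod s1 s2)) using 1
    ext <;> simp [toroidalPeriod]

def toroidalRep : PresentedGroup (rels333 s1 s2) →* Perm (Residue (toroidalPeriod s1 s2)) :=
  PresentedGroup.toGroup (lift_rels333_eq_one s1 s2)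

theorem toroidalRep_of_zero : toroidalRep s1 s2 (PresentedGroup.of 0) = rotA s1 s2 :=
  PresentedGroup.toGroup.of _

theorem toroidalRep_of_one : toroidalRep s1 s2 (PresentedGroup.of 1) = rotB s1 s2 :=
  PresentedGroup.toGroup.of _

theorem of_zero_pow_three : (PresentedGroup.of 0 : PresentedGroup (rels333 s1 s2)) ^ 3 = 1 :=
  PresentedGroup.one_of_mem (by simp [rels333])

theorem toroidalRep_zpowers_apply_zero :
    ∀ g ∈ Subgroup.zpowers (PresentedGroup.of 0), toroidalRep s1 s2 g 0 = 0 := by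
  have hle : Subgroup.zpowers (PresentedGroup.of 0) ≤
      (MulAction.stabilizer _ (0 : Residue (toroidalPeriod s1 s2))).comap (toroidalRep s1 s2) :=
    Subgroup.zpowers_le.mpr (by simp [toroidalRep_of_zero])
  intro g hg
  simpa [Perm.smul_def] using hle hg

theorem omegaResidue_one_ne (hs : 2 < s1 + s2) :
    omegaResidue (toroidalPeriod s1 s2) (Submodule.Quotient.mk (1, 0)) ≠
      Submodule.Quotient.mk (1, 0) := by
  rw [Ne, ← sub_eq_zero]
  simp only [omegaResidue, LinearMap.toAddMonoidHom_coe, mapQ_apply, ← Quotient.mk_sub,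
    Quotient.mk_eq_zero]
  apply not_mem_idealSpan_of_normSq_lt <;> simp [normSq, toroidalPeriod]
  nlinarith

end ToroidalHypermap

theorem stmt_15 (s1 s2 : ℕ) (hs : 2 < s1 + s2) :
    (Subgroup.zpowers
        (PresentedGroup.of 0 : PresentedGroup (rels333 s1 s2))).normalCore = ⊥ := by
  refine Subgroup.normalCore_eq_bot_of_fixes (toroidalRep s1 s2)
    (toroidalRep_zpowers_apply_zero s1 s2) (PresentedGroup.of 1) ?_
  rintro y hy hfix
  obtain ⟨r, hr, rfl⟩ := exists_pow_eq_of_mem_zpowers three_pos (of_zero_pow_three s1 s2) hy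
  have hfix_one :
      (rotA s1 s2 ^ r) (Submodule.Quotient.mk (1, 0)) = Submodule.Quotient.mk (1, 0) := by
    simpa [toroidalRep_of_zero, toroidalRep_of_one] using hfix
  rw [eq_zero_of_cubeRootRotation_pow_apply (omegaResidue_cubeRoot _) hr hfix_one
    (omegaResidue_one_ne s1 s2 hs), pow_zero]
end

section
/- Let u and v be commuting elements of a group with u^{s1} v^{s2} = 1 and (after conjugation symmetry) u^{s2} = v^{s1}, where gcd(s1, s2) = g and s1² + s2² = N with N > 0. Then the subgroup T = ⟨u, v⟩ is finite of order dividing N, ⟨u⟩ has index dividing g in T, and u has order dividing N/g. -/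
theorem stmt_16 {G : Type*} [Group G] (u v : G) (huv : Commute u v)
    (s1 s2 : ℕ) (hN : 0 < s1 ^ 2 + s2 ^ 2)
    (h1 : u ^ s1 = (v ^ s2)⁻¹) (h2 : u ^ s2 = v ^ s1) :
    Nat.card (Subgroup.closure ({u, v} : Set G)) ∣ s1 ^ 2 + s2 ^ 2 ∧
    (Subgroup.zpowers u).relIndex (Subgroup.closure ({u, v} : Set G)) ∣ Nat.gcd s1 s2 ∧
    orderOf u ∣ (s1 ^ 2 + s2 ^ 2) / Nat.gcd s1 s2 := by
  set g : ℕ := Nat.gcd s1 s2 with hg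
  set N : ℕ := s1 ^ 2 + s2 ^ 2 with hNdef
  have hd1 : g ∣ s1 := Nat.gcd_dvd_left _ _
  have hd2 : g ∣ s2 := Nat.gcd_dvd_right _ _
  have hgpos : 0 < g := by
    rcases Nat.eq_zero_or_pos g with h | h
    · obtain ⟨e1, e2⟩ := Nat.gcd_eq_zero_iff.mp h
      simp [hNdef, e1, e2] at hN
    · exact h
  have hgN : g ∣ N :=
    dvd_add (by rw [sq]; exact hd1.mul_right s1) (by rw [sq]; exact hd2.mul_right s2)
  have h1' : v ^ s2 = (u ^ s1)⁻¹ := by rw [h1, inv_inv]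
  -- u ^ (N / g) = 1
  have hcross : s2 * (s1 / g) = s1 * (s2 / g) := by
    apply Nat.eq_of_mul_eq_mul_right hgpos
    rw [mul_assoc, mul_assoc, Nat.div_mul_cancel hd1, Nat.div_mul_cancel hd2, mul_comm]
  have hNg : N / g = s1 * (s1 / g) + s2 * (s2 / g) := by
    rw [Nat.div_eq_iff_eq_mul_left hgpos hgN, add_mul, mul_assoc, mul_assoc,
      Nat.div_mul_cancel hd1, Nat.div_mul_cancel hd2, ← sq, ← sq]
  have hu1 : u ^ (s1 * (s1 / g) + s2 * (s2 / g)) = 1 := by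
    rw [pow_add, pow_mul, pow_mul, h1, h2, inv_pow, ← pow_mul, ← pow_mul, hcross,
      inv_mul_cancel]
  have hordu : orderOf u ∣ N / g := by
    rw [hNg]; exact orderOf_dvd_of_pow_eq_one hu1
  -- v ^ g ∈ zpowers u
  have hvg : v ^ g ∈ Subgroup.zpowers u := by
    have hbez : (g : ℤ) = s1 * Nat.gcdA s1 s2 + s2 * Nat.gcdB s1 s2 := Nat.gcd_eq_gcd_ab s1 s2
    have key : v ^ (g : ℤ) = u ^ ((s2 : ℤ) * Nat.gcdA s1 s2 - (s1 : ℤ) * Nat.gcdB s1 s2) := by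
      rw [hbez, zpow_add, zpow_mul, zpow_mul, zpow_sub, zpow_mul, zpow_mul,
        zpow_natCast, zpow_natCast, zpow_natCast u s1, zpow_natCast u s2, ← h2, h1',
        inv_zpow]
    rw [← zpow_natCast v g, key]
    exact Subgroup.zpow_mem _ (Subgroup.mem_zpowers u) _
  set T := Subgroup.closure ({u, v} : Set G) with hT
  have huT : u ∈ T := Subgroup.subset_closure (by simp)
  have hvT : v ∈ T := Subgroup.subset_closure (by simp)
  have hle : Subgroup.zpowers u ≤ T := Subgroup.zpowers_le.mpr huT
  letI : CommGroup ↥T := Subgroup.closureCommGroupOfComm (by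
    rintro x (rfl | rfl) y (rfl | rfl)
    · rfl
    · exact huv
    · exact huv.symm
    · rfl)
  set H' : Subgroup ↥T := (Subgroup.zpowers u).subgroupOf T with hH'
  -- T is generated (as a group) by u and v
  have hgen : Subgroup.closure ({⟨u, huT⟩, ⟨v, hvT⟩} : Set ↥T) = ⊤ := by
    apply Subgroup.map_injective T.subtype_injective
    rw [MonoidHom.map_closure]
    have himg : T.subtype '' ({⟨u, huT⟩, ⟨v, hvT⟩} : Set ↥T) = {u, v} := by
      simp [Set.image_insert_eq]
    rw [himg, ← MonoidHom.range_eq_map, Subgroup.range_subtype, hT]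
  -- the quotient T / H' is generated by the image of v
  set q : ↥T →* ↥T ⧸ H' := QuotientGroup.mk' H' with hq
  have hqu : q ⟨u, huT⟩ = 1 := by
    rw [hq, QuotientGroup.mk'_apply, QuotientGroup.eq_one_iff]
    exact Subgroup.mem_subgroupOf.mpr (Subgroup.mem_zpowers u)
  have hqtop : Subgroup.zpowers (q ⟨v, hvT⟩) = ⊤ := by
    have hmap := congrArg (Subgroup.map q) hgen
    rw [MonoidHom.map_closure] at hmap
    have himg : q '' ({⟨u, huT⟩, ⟨v, hvT⟩} : Set ↥T) = {1} ∪ {q ⟨v, hvT⟩} := by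
      rw [Set.image_insert_eq, Set.image_singleton, hqu]; rfl
    rw [himg, Subgroup.closure_union, Subgroup.closure_singleton_one, bot_sup_eq,
      ← Subgroup.zpowers_eq_closure, ← MonoidHom.range_eq_map] at hmap
    rw [hmap, MonoidHom.range_eq_top]
    exact QuotientGroup.mk'_surjective H'
  -- order of the image of v divides g
  have hqvg : (q ⟨v, hvT⟩) ^ g = 1 := by
    rw [← map_pow, hq, QuotientGroup.mk'_apply, QuotientGroup.eq_one_iff]
    exact Subgroup.mem_subgroupOf.mpr (by exact_mod_cast hvg)
  have hrel : (Subgroup.zpowers u).relIndex T ∣ g := by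
    have : (Subgroup.zpowers u).relIndex T = Nat.card (↥T ⧸ H') := by
      rw [Subgroup.relIndex, ← hH', Subgroup.index_eq_card]
    rw [this, ← Subgroup.card_top (G := ↥T ⧸ H'), ← hqtop, Nat.card_zpowers]
    exact orderOf_dvd_of_pow_eq_one hqvg
  -- card of T
  have hcardH' : Nat.card H' = orderOf u := by
    rw [← Nat.card_zpowers u]
    exact Nat.card_congr (Subgroup.subgroupOfEquivOfLe hle).toEquiv
  have hcardT : Nat.card ↥T = orderOf u * (Subgroup.zpowers u).relIndex T := by
    rw [← hcardH', Subgroup.relIndex, ← hH', Subgroup.card_mul_index H']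
  have hcard : Nat.card ↥T ∣ N := by
    rw [hcardT]
    calc orderOf u * (Subgroup.zpowers u).relIndex T ∣ (N / g) * g :=
          mul_dvd_mul hordu hrel
      _ = N := Nat.div_mul_cancel hgN
  exact ⟨hcard, hrel, hordu⟩
end
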